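/- arXiv:1310.1709 — 3 statements merged into one kernel-verified Lean document; each statement's English description precedes it below -/
import Mathlib

section
/- Let f : D ⊆ ℝ^m → ℝ^n be C¹ with g = f_{1:r} a submersion on D, and let u ⊆ D be a compact box (product of closed intervals with nonempty interior) in ℝ^m. Let Y ⊆ ℝ^r be a nonempty box. If (i) Y ∩ g(∂u) = ∅, and (ii) there exists ũ ∈ u with g(ũ) ∈ Y, then Y ⊆ g(u). -/
/-! A submersion is an open map near each point, so `g '' u` is a neighbourhood of the image
of every interior point of `u`. As `Y` misses `g (∂u)`, every point of `Y ∩ g '' u` is the image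
of an interior point, hence lies in the interior of the compact set `g '' u`. The connected set
`Y` thus meets `g '' u` in a nonempty set that is both open and closed in `Y`, so
`Y ⊆ g '' u`. -/

open Set Filter Topology

theorem IsPreconnected.subset_of_inter_subset_interior {X : Type*} [TopologicalSpace X]
    {Y C : Set X} (hY : IsPreconnected Y) (hC : IsClosed C) (hne : (Y ∩ C).Nonempty)
    (h : Y ∩ C ⊆ interior C) : Y ⊆ C := by
  obtain ⟨y, hyY, hyC⟩ := hne
  refine (hY.subset_of_closure_inter_subset isOpen_interior ⟨y, hyY, h ⟨hyY, hyC⟩⟩ ?_).trans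
    interior_subset
  rintro z ⟨hz, hzY⟩
  exact h ⟨hzY, hC.closure_subset_iff.2 interior_subset hz⟩

section Submersion

variable {𝕜 E F : Type*} [RCLike 𝕜]
  [NormedAddCommGroup E] [NormedSpace 𝕜 E] [CompleteSpace E]
  [NormedAddCommGroup F] [NormedSpace 𝕜 F] [CompleteSpace F]

theorem ContDiffAt.image_mem_nhds_of_surjective_fderiv {g : E → F} {x : E} {s : Set E}
    (hg : ContDiffAt 𝕜 1 g x) (hsurj : Function.Surjective (fderiv 𝕜 g x))
    (hs : s ∈ 𝓝 x) : g '' s ∈ 𝓝 (g x) := by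
  rw [← (hg.hasStrictFDerivAt one_ne_zero).map_nhds_eq_of_surj
    (LinearMap.range_eq_top.2 hsurj)]
  exact image_mem_map hs

theorem subset_image_of_inter_image_frontier_eq_empty {D u : Set E} {Y : Set F} {g : E → F}
    (hD : IsOpen D) (hg : ContDiffOn 𝕜 1 g D)
    (hsurj : ∀ x ∈ D, Function.Surjective (fderiv 𝕜 g x))
    (hu : IsCompact u) (huD : u ⊆ D) (hY : IsPreconnected Y)
    (hdisj : Y ∩ g '' frontier u = ∅) (hne : (Y ∩ g '' u).Nonempty) : Y ⊆ g '' u := by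
  refine hY.subset_of_inter_subset_interior
    (hu.image_of_continuousOn (hg.continuousOn.mono huD)).isClosed hne ?_
  rintro _ ⟨hyY, x, hxu, rfl⟩
  have hx : x ∈ interior u := by
    by_contra hx
    have hxf : x ∈ frontier u := by rw [hu.isClosed.frontier_eq]; exact ⟨hxu, hx⟩
    exact (hdisj ▸ ⟨hyY, x, hxf, rfl⟩ : g x ∈ (∅ : Set F))
  have hxD : x ∈ D := huD hxu
  exact mem_interior_iff_mem_nhds.2 <|
    ((hg x hxD).contDiffAt (hD.mem_nhds hxD)).image_mem_nhds_of_surjective_fderiv (hsurj x hxD)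
      (mem_interior_iff_mem_nhds.1 hx)

end Submersion

theorem box_subset_image_of_boundary_disjoint_general {m n r : ℕ} (hrn : r ≤ n)
    (D : Set (Fin m → ℝ)) (hD : IsOpen D)
    (f : (Fin m → ℝ) → (Fin n → ℝ)) (hf : ContDiffOn ℝ 1 f D)
    (g : (Fin m → ℝ) → (Fin r → ℝ))
    (hg : ∀ x, g x = fun i => f x (Fin.castLE hrn i))
    (hrank : ∀ x ∈ D, Function.Surjective (fderiv ℝ g x))
    (a b : Fin m → ℝ)
    (u : Set (Fin m → ℝ)) (hu : u = Set.univ.pi fun i => Set.Icc (a i) (b i))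
    (huD : u ⊆ D)
    (c d : Fin r → ℝ)
    (Y : Set (Fin r → ℝ)) (hY : Y = Set.univ.pi fun i => Set.Icc (c i) (d i))
    (hdisj : Y ∩ g '' (frontier u) = ∅)
    (hmem : ∃ u0 ∈ u, g u0 ∈ Y) :
    Y ⊆ g '' u := by
  have hgD : ContDiffOn ℝ 1 g D := by
    rw [funext hg]
    exact contDiffOn_pi.2 fun i => contDiffOn_pi.1 hf _
  have hucpt : IsCompact u := hu ▸ isCompact_univ_pi fun i => isCompact_Icc
  have hYconn : IsPreconnected Y :=
    hY ▸ (convex_pi fun i _ => convex_Icc (c i) (d i)).isPreconnected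
  obtain ⟨u0, hu0, hgu0⟩ := hmem
  exact subset_image_of_inter_image_frontier_eq_empty hD hgD hrank hucpt huD hYconn hdisj
    ⟨g u0, hgu0, u0, hu0, rfl⟩

/-- Inner inclusion criterion: if `g = f_{1:r}` is a submersion on `D`, `u ⊆ D` is a
compact box with nonempty interior, `Y` is a nonempty box with `Y ∩ g(∂u) = ∅` and
`g(u0) ∈ Y` for some `u0 ∈ u`, then `Y ⊆ g(u)`. -/
theorem box_subset_image_of_boundary_disjoint {m n r : ℕ} (hrn : r ≤ n)
    (D : Set (Fin m → ℝ)) (hD : IsOpen D)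
    (f : (Fin m → ℝ) → (Fin n → ℝ)) (hf : ContDiffOn ℝ 1 f D)
    (g : (Fin m → ℝ) → (Fin r → ℝ))
    (hg : ∀ x, g x = fun i => f x (Fin.castLE hrn i))
    (hrank : ∀ x ∈ D, Function.Surjective (fderiv ℝ g x))
    (a b : Fin m → ℝ) (hab : ∀ i, a i < b i)
    (u : Set (Fin m → ℝ)) (hu : u = Set.univ.pi fun i => Set.Icc (a i) (b i))
    (huD : u ⊆ D)
    (c d : Fin r → ℝ) (hcd : ∀ i, c i ≤ d i)
    (Y : Set (Fin r → ℝ)) (hY : Y = Set.univ.pi fun i => Set.Icc (c i) (d i))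
    (hdisj : Y ∩ g '' (frontier u) = ∅)
    (hmem : ∃ u0 ∈ u, g u0 ∈ Y) :
    Y ⊆ g '' u :=
  box_subset_image_of_boundary_disjoint_general hrn D hD f hf g hg hrank a b u hu huD c d Y hY hdisj
    hmem
end

section
/- Every interval H-matrix is regular: let A be an m×m interval matrix, with comparison matrix ⟨A⟩ defined by ⟨A⟩_{ii} = mignitude(A_{ii}) and ⟨A⟩_{ij} = −magnitude(A_{ij}) for i ≠ j. If there exists u ∈ ℝ^m with u > 0 componentwise and ⟨A⟩u > 0 componentwise, then every real matrix M contained entrywise in A is invertible. -/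
open Finset

/-- Mignitude of the interval `[a, b]`. -/
noncomputable def mig (a b : ℝ) : ℝ := if a ≤ 0 ∧ 0 ≤ b then 0 else min |a| |b|

/-- Magnitude of the interval `[a, b]`. -/
noncomputable def mag (a b : ℝ) : ℝ := max |a| |b|

/-- Comparison matrix of an interval matrix given by bound matrices `lo ≤ up`. -/
noncomputable def compMatrix {m : ℕ} (lo up : Matrix (Fin m) (Fin m) ℝ) :
    Matrix (Fin m) (Fin m) ℝ :=
  fun i j => if i = j then mig (lo i i) (up i i) else -(mag (lo i j) (up i j))

lemma mig_le_abs {a b c : ℝ} (h1 : a ≤ c) (h2 : c ≤ b) : mig a b ≤ |c| := by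
  unfold mig
  split
  · exact abs_nonneg c
  · next h =>
    push_neg at h
    rcases le_or_gt a 0 with ha | ha
    · have hb : b < 0 := h ha
      have hc : c < 0 := lt_of_le_of_lt h2 hb
      have : |b| ≤ |c| := by rw [abs_of_neg hb, abs_of_neg hc]; linarith
      exact le_trans (min_le_right _ _) this
    · have : |a| ≤ |c| := by
        rw [abs_of_pos ha, abs_of_pos (lt_of_lt_of_le ha h1)]; linarith
      exact le_trans (min_le_left _ _) this

lemma abs_le_mag {a b c : ℝ} (h1 : a ≤ c) (h2 : c ≤ b) : |c| ≤ mag a b :=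
  abs_le_max_abs_abs h1 h2

/-- Every interval H-matrix is regular: if there exists a componentwise positive
vector `u` with `⟨A⟩ u > 0` componentwise, then every real matrix contained
entrywise in the interval matrix `A` is invertible. -/
theorem interval_h_matrix_regular {m : ℕ}
    (lo up : Matrix (Fin m) (Fin m) ℝ) (hle : ∀ i j, lo i j ≤ up i j)
    (u : Fin m → ℝ) (hu : ∀ i, 0 < u i)
    (hH : ∀ i, 0 < ∑ j, compMatrix lo up i j * u j) :
    ∀ M : Matrix (Fin m) (Fin m) ℝ,
      (∀ i j, M i j ∈ Set.Icc (lo i j) (up i j)) → IsUnit M := by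
  intro M hM
  have key : ∀ x : Fin m → ℝ, M.mulVec x = 0 → x = 0 := by
    intro x hx
    by_contra hxne
    obtain ⟨k, hk⟩ := Function.ne_iff.mp hxne
    simp only [Pi.zero_apply] at hk
    obtain ⟨i, _, hi⟩ := Finset.exists_max_image (univ : Finset (Fin m))
      (fun j => |x j| / u j) ⟨k, mem_univ k⟩
    set t : ℝ := |x i| / u i with ht
    have hbound : ∀ j, |x j| ≤ t * u j := fun j =>
      (div_le_iff₀ (hu j)).mp (hi j (mem_univ j))
    have hxi : |x i| = t * u i := by
      rw [ht, div_mul_cancel₀ _ (hu i).ne']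
    have htpos : 0 < t := by
      have h1 : 0 < |x k| / u k := div_pos (abs_pos.mpr hk) (hu k)
      exact lt_of_lt_of_le h1 (hi k (mem_univ k))
    have hrow : ∑ j, M i j * x j = 0 := by
      have := congrFun hx i
      simpa [Matrix.mulVec, dotProduct] using this
    rw [← Finset.sum_erase_add _ _ (mem_univ i)] at hrow
    set mg : ℝ := mig (lo i i) (up i i) with hmg
    set S : ℝ := ∑ j ∈ univ.erase i, mag (lo i j) (up i j) * u j with hS
    -- from hH i : S < mg * u i
    have hcomp : ∑ j, compMatrix lo up i j * u j = mg * u i - S := by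
      rw [← Finset.sum_erase_add _ _ (mem_univ i)]
      simp only [compMatrix, if_pos rfl]
      rw [Finset.sum_congr rfl (fun j hj => by
        rw [if_neg (Finset.ne_of_mem_erase hj).symm])]
      simp [hS, Finset.sum_neg_distrib]
      ring
    have hHS : S < mg * u i := by have := hH i; rw [hcomp] at this; linarith
    -- chain of inequalities
    have hchain : mg * (t * u i) ≤ t * S := by
      calc mg * (t * u i) = mg * |x i| := by rw [hxi]
        _ ≤ |M i i| * |x i| :=
          mul_le_mul_of_nonneg_right
            (mig_le_abs (hM i i).1 (hM i i).2) (abs_nonneg _)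
        _ = |M i i * x i| := (abs_mul _ _).symm
        _ = |∑ j ∈ univ.erase i, M i j * x j| := by
            have : M i i * x i = -∑ j ∈ univ.erase i, M i j * x j := by linarith
            rw [this, abs_neg]
        _ ≤ ∑ j ∈ univ.erase i, |M i j * x j| := Finset.abs_sum_le_sum_abs _ _
        _ ≤ ∑ j ∈ univ.erase i, mag (lo i j) (up i j) * (t * u j) := by
            apply Finset.sum_le_sum
            intro j _
            rw [abs_mul]
            exact mul_le_mul (abs_le_mag (hM i j).1 (hM i j).2) (hbound j)
              (abs_nonneg _) (le_trans (abs_nonneg _)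
                (abs_le_mag (hM i j).1 (hM i j).2))
        _ = t * S := by
            rw [hS, Finset.mul_sum]
            exact Finset.sum_congr rfl (fun j _ => by ring)
    nlinarith [hchain, hHS, htpos]
  rw [← Matrix.mulVec_injective_iff_isUnit]
  intro x y hxy
  have : M.mulVec (x - y) = 0 := by
    rw [Matrix.mulVec_sub, hxy, sub_self]
  have := key _ this
  exact sub_eq_zero.mp this
end

section
/- Rohn's regularity criterion: let A be an m×m interval matrix written as A = A_c + [−Δ, Δ] where A_c is the (real) midpoint matrix and Δ ≥ 0 entrywise is the radius matrix. Suppose A_c is invertible and the spectral radius of D = |A_c^{-1}| Δ satisfies ρ(D) < 1 (where |·| is entrywise absolute value). Then every real matrix M with |M − A_c| ≤ Δ entrywise is invertible. -/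
/-!
If `M` were singular, pick `x ≠ 0` with `M x = 0`. Then `x = A_c⁻¹ (A_c - M) x`, and taking
entrywise absolute values gives `|x| ≤ D |x|` with `D ≥ 0`, hence `|x| ≤ Dⁿ |x|` for every `n`.
By Gelfand's formula, `ρ(D) < 1` makes some power `Dⁿ` a strict contraction in the `ℓ∞` operator
norm, which forces `|x| = 0`.
-/

open Matrix Filter
open scoped NNReal ENNReal

attribute [local instance] Matrix.linftyOpSeminormedAddCommGroup Matrix.linftyOpNormedAddCommGroup
  Matrix.linftyOpNormedRing Matrix.linftyOpNormedAlgebra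

namespace spectrum

theorem spectralRadius_lt_of_forall_norm_lt {𝕜 A : Type*} [NormedField 𝕜] [ProperSpace 𝕜]
    [NormedRing A] [NormedAlgebra 𝕜 A] [CompleteSpace A] {a : A} {r : ℝ≥0} (hr : 0 < r)
    (h : ∀ k ∈ spectrum 𝕜 a, ‖k‖ < r) : spectralRadius 𝕜 a < r := by
  rcases (spectrum 𝕜 a).eq_empty_or_nonempty with he | hne
  · simpa [spectralRadius, he] using hr
  · exact spectralRadius_lt_of_forall_lt_of_nonempty hne fun k hk => h k hk

theorem exists_pow_norm_lt_one_of_spectralRadius_lt_one {A : Type*} [NormedRing A]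
    [NormedAlgebra ℂ A] [CompleteSpace A] {a : A} (h : spectralRadius ℂ a < 1) :
    ∃ n, ‖a ^ n‖ < 1 := by
  obtain ⟨n, hn, hlt⟩ := ((eventually_ge_atTop 1).and
    ((pow_nnnorm_pow_one_div_tendsto_nhds_spectralRadius a).eventually_lt_const h)).exists
  refine ⟨n, ?_⟩
  have : (‖a ^ n‖₊ : ℝ≥0∞) < 1 := by
    by_contra! h1
    exact (ENNReal.one_le_rpow h1 (by positivity)).not_gt hlt
  exact_mod_cast this

end spectrum

namespace Matrix

variable {m n α : Type*} [Fintype n]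

theorem linfty_opNorm_map_of_norm_eq {β : Type*} [Fintype m] [SeminormedAddCommGroup α]
    [SeminormedAddCommGroup β] {f : α → β} (hf : ∀ a, ‖f a‖ = ‖a‖) (A : Matrix m n α) :
    ‖A.map f‖ = ‖A‖ := by
  have hf' (a : α) : ‖f a‖₊ = ‖a‖₊ := NNReal.eq (hf a)
  simp only [linfty_opNorm_def, map_apply, hf']

section Order

variable [Ring α] [LinearOrder α] [IsStrictOrderedRing α]

theorem mulVec_mono_of_nonneg {A : Matrix m n α} (hA : ∀ i j, 0 ≤ A i j) {x y : n → α}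
    (h : x ≤ y) : A *ᵥ x ≤ A *ᵥ y :=
  fun i => dotProduct_le_dotProduct_of_nonneg_left h (hA i)

theorem abs_mulVec_le_of_abs_le {A C : Matrix m n α} (hAC : ∀ i j, |A i j| ≤ C i j)
    (x : n → α) : |A *ᵥ x| ≤ C *ᵥ |x| := fun i =>
  calc |(A *ᵥ x) i| ≤ ∑ j, |A i j * x j| := Finset.abs_sum_le_sum_abs _ _
    _ ≤ ∑ j, C i j * |x j| := by
      gcongr with j
      rw [abs_mul]
      exact mul_le_mul_of_nonneg_right (hAC i j) (abs_nonneg _)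

theorem le_pow_mulVec_of_le_mulVec [DecidableEq n] {A : Matrix n n α} (hA : ∀ i j, 0 ≤ A i j)
    {x : n → α} (h : x ≤ A *ᵥ x) (k : ℕ) : x ≤ A ^ k *ᵥ x := by
  induction k with
  | zero => simp
  | succ k ih =>
    calc x ≤ A *ᵥ x := h
      _ ≤ A *ᵥ (A ^ k *ᵥ x) := mulVec_mono_of_nonneg hA ih
      _ = A ^ (k + 1) *ᵥ x := by rw [mulVec_mulVec, pow_succ']

end Order

theorem abs_le_mulVec_abs_of_mulVec_eq_zero {α : Type*} [Field α] [LinearOrder α]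
    [IsStrictOrderedRing α] [DecidableEq n] {A M Δ : Matrix n n α} (hA : IsUnit A)
    (hM : ∀ i j, |M i j - A i j| ≤ Δ i j) {x : n → α} (hx : M *ᵥ x = 0) :
    |x| ≤ (A⁻¹.map abs * Δ) *ᵥ |x| := by
  have hx_eq : x = A⁻¹ *ᵥ ((A - M) *ᵥ x) := by
    rw [sub_mulVec, hx, sub_zero, mulVec_mulVec,
      nonsing_inv_mul _ ((isUnit_iff_isUnit_det A).mp hA), one_mulVec]
  calc |x| ≤ A⁻¹.map abs *ᵥ |(A - M) *ᵥ x| := by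
        conv_lhs => rw [hx_eq]
        exact abs_mulVec_le_of_abs_le (fun _ _ => le_rfl) _
    _ ≤ A⁻¹.map abs *ᵥ (Δ *ᵥ |x|) :=
        mulVec_mono_of_nonneg (fun _ _ => abs_nonneg _) <| abs_mulVec_le_of_abs_le
          (fun i j => by rw [Matrix.sub_apply, abs_sub_comm]; exact hM i j) x
    _ = (A⁻¹.map abs * Δ) *ᵥ |x| := mulVec_mulVec _ _ _

theorem eq_zero_of_le_mulVec_of_norm_lt_one {A : Matrix n n ℝ} (hA : ‖A‖ < 1)
    {x : n → ℝ} (hx : 0 ≤ x) (h : x ≤ A *ᵥ x) : x = 0 := by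
  have hnorm : ‖x‖ ≤ ‖A *ᵥ x‖ := by
    refine (pi_norm_le_iff_of_nonneg (norm_nonneg _)).mpr fun i => ?_
    calc ‖x i‖ = x i := Real.norm_of_nonneg (hx i)
      _ ≤ (A *ᵥ x) i := h i
      _ ≤ ‖A *ᵥ x‖ := (Real.le_norm_self _).trans (norm_le_pi_norm _ i)
  have : ‖x‖ ≤ ‖A‖ * ‖x‖ := hnorm.trans (linfty_opNorm_mulVec A x)
  exact norm_le_zero_iff.mp (by nlinarith [norm_nonneg x])

end Matrix

/-- Rohn's regularity criterion: if the midpoint matrix `A_c` is invertible and the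
spectral radius of `D = |A_c⁻¹| Δ` is `< 1` (every complex eigenvalue of `D` has
modulus `< 1`), then every real matrix `M` with `|M - A_c| ≤ Δ` entrywise is
invertible. -/
theorem rohn_regularity_criterion {m : ℕ}
    (Ac Δ : Matrix (Fin m) (Fin m) ℝ)
    (hAc : IsUnit Ac) (hΔ : ∀ i j, 0 ≤ Δ i j)
    (D : Matrix (Fin m) (Fin m) ℝ)
    (hD : D = (Matrix.of fun i j => |Ac⁻¹ i j|) * Δ)
    (hρ : ∀ μ : ℂ, μ ∈ spectrum ℂ (D.map (Complex.ofReal)) → ‖μ‖ < 1) :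
    ∀ M : Matrix (Fin m) (Fin m) ℝ,
      (∀ i j, |M i j - Ac i j| ≤ Δ i j) → IsUnit M := by
  intro M hM
  rw [isUnit_iff_isUnit_det, isUnit_iff_ne_zero]
  intro hdet
  obtain ⟨x, hx0, hMx⟩ := exists_mulVec_eq_zero_iff.mpr hdet
  have hD_nonneg : ∀ i j, 0 ≤ D i j := fun i j => by
    rw [hD, mul_apply]; exact Finset.sum_nonneg fun k _ => mul_nonneg (abs_nonneg _) (hΔ k j)
  have hx_le : |x| ≤ D *ᵥ |x| := hD ▸ abs_le_mulVec_abs_of_mulVec_eq_zero hAc hM hMx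
  obtain ⟨n, hn⟩ := spectrum.exists_pow_norm_lt_one_of_spectralRadius_lt_one
    (spectrum.spectralRadius_lt_of_forall_norm_lt one_pos (by simpa using hρ))
  have hpow : D.map Complex.ofReal ^ n = (D ^ n).map Complex.ofReal :=
    (D.map_pow Complex.ofRealHom n).symm
  rw [hpow, linfty_opNorm_map_of_norm_eq Complex.norm_real] at hn
  exact hx0 <| (Pi.abs_eq_zero x).mp <|
    eq_zero_of_le_mulVec_of_norm_lt_one hn (abs_nonneg x)
      (le_pow_mulVec_of_le_mulVec hD_nonneg hx_le n)
end
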